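/- For a 1-writer program partitioned into blocks by a preemption point set 𝒫, if the conflict graph on the outer blocks (with an edge b_r → b_w whenever the last write to some variable x in b_w conflicts with a read of x in b_r) contains a directed cycle, then there is no sequentially consistent interleaving of the block-program. -/

import Mathlib

/-- Memory events: reads and writes of natural-number values to variables of type `V`. -/
inductive Event (V : Type) where
  | read  (x : V) (d : ℕ)
  | write (x : V) (d : ℕ)
deriving DecidableEq

variable {V ι : Type}

/-- A sequence of events is sequentially consistent (SC): every read `r(x,d)` has a
preceding write `w(x,d)` with no write of a different value to `x` in between. -/
def SC (σ : List (Event V)) : Prop :=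
  ∀ p x d, σ[(p : ℕ)]? = some (Event.read x d) →
    ∃ q, q < p ∧ σ[q]? = some (Event.write x d) ∧
      ∀ r, q < r → r < p → ∀ d', d' ≠ d → σ[r]? ≠ some (Event.write x d')

/-- `σ` is an interleaving of the given threads: its restriction to each
thread identifier equals that thread's event sequence. -/
def IsInterleaving [DecidableEq ι] (threads : ι → List (Event V)) (σ : List (ι × Event V)) : Prop :=
  ∀ i, σ.filterMap (fun a => if a.1 = i then some a.2 else none) = threads i

/-- A preemption occurs at position `j`: the events at `j` and `j+1` are from
different threads and the event at `j` is not the last event of its thread. -/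
def PreemptionAt (σ : List (ι × Event V)) (j : ℕ) : Prop :=
  ∃ a b, σ[j]? = some a ∧ σ[j + 1]? = some b ∧ a.1 ≠ b.1 ∧
    ∃ r c, j < r ∧ σ[r]? = some c ∧ c.1 = a.1

open Classical in
/-- The number of preemption positions of `σ`. -/
noncomputable def numPreemptions (σ : List (ι × Event V)) : ℕ :=
  ((Finset.range σ.length).filter fun j => PreemptionAt σ j).card

open Classical in
/-- The number of context switches of `σ` (adjacent events of different threads). -/
noncomputable def numSwitches (σ : List (ι × Event V)) : ℕ :=
  ((Finset.range σ.length).filter fun j =>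
    ∃ a b, σ[j]? = some a ∧ σ[j + 1]? = some b ∧ a.1 ≠ b.1).card

/-- The (increasing) list of positions of `σ` carrying events of thread `i`. -/
def threadPositions [DecidableEq ι] (σ : List (ι × Event V)) (i : ι) : List ℕ :=
  (List.range σ.length).filter fun p => decide ((σ[p]?).map Prod.fst = some i)

/-- The position in `σ` of the `j`-th event of thread `i`. -/
def posOf [DecidableEq ι] (σ : List (ι × Event V)) (i : ι) (j : ℕ) : ℕ :=
  (threadPositions σ i).getD j 0

/-- All events of thread `t` occur before all events of thread `t'` in `σ`. -/
def ThreadBefore [DecidableEq ι] (σ : List (ι × Event V)) (t t' : ι) : Prop :=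
  ∀ p ∈ threadPositions σ t, ∀ q ∈ threadPositions σ t', p < q

/-- The event is a write to variable `x`. -/
def writesTo (x : V) : Event V → Prop
  | Event.write y _ => y = x
  | _ => False

/-- A 1-writer program: for each variable, a single thread performs all writes to it. -/
def OneWriter (threads : ι → List (Event V)) : Prop :=
  ∀ x i i', (∃ e ∈ threads i, writesTo x e) → (∃ e ∈ threads i', writesTo x e) → i = i'

/-- The events of thread `i` from its index `s` onwards appear contiguously in `σ`. -/
def ContiguousFrom [DecidableEq ι] (σ : List (ι × Event V)) (i : ι) (s : ℕ) : Prop :=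
  ∀ j, s ≤ j → j + 1 < (threadPositions σ i).length → posOf σ i (j + 1) = posOf σ i j + 1

/-- Conflict-graph edge `tr → tw` between outer blocks (suffixes of the threads
starting at indices `s tr`, `s tw`): the last write to some variable `x` in the
outer block of `tw` conflicts with a read of `x` in the outer block of `tr`. -/
def ConflictEdge [DecidableEq ι] (threads : ι → List (Event V)) (s : ι → ℕ) (tr tw : ι) : Prop :=
  tr ≠ tw ∧ ∃ x d d' jr jw, d ≠ d' ∧
    s tr ≤ jr ∧ (threads tr)[jr]? = some (Event.read x d) ∧
    s tw ≤ jw ∧ (threads tw)[jw]? = some (Event.write x d') ∧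
    ∀ j d'', jw < j → (threads tw)[j]? ≠ some (Event.write x d'')

/-- Splitting a list into contiguous blocks immediately after each position in `cut`. -/
def splitAtCuts {α : Type} (l : List α) (cut : Finset ℕ) : List (List α) :=
  let cs := cut.sort (· ≤ ·)
  ((0 :: cs.map (· + 1)).zip (cs.map (· + 1) ++ [l.length])).map fun p => (l.take p.2).drop p.1

/-! Each outer block occupies an interval of the interleaving; compare threads by the position
of their last event. An edge `tr → tw` forces `tr` to end before `tw`: by SC the read `r(x,d)`
of `tr` is served by a write `w(x,d)`, which by the 1-writer condition belongs to `tw` and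
precedes its last write `w(x,d')` to `x`. That last write cannot fall between the two, so the read
precedes it, and two disjoint intervals ordered at one point are ordered at their ends. Along a
cycle this gives a position strictly smaller than itself. -/

section Interleaving

variable [DecidableEq ι]

lemma threadPositions_cons (a : ι × Event V) (σ : List (ι × Event V)) (i : ι) :
    threadPositions (a :: σ) i =
      (if a.1 = i then [0] else []) ++ (threadPositions σ i).map Nat.succ := by
  unfold threadPositions
  rw [List.length_cons, List.range_succ_eq_map, List.filter_cons, List.filter_map]
  by_cases h : a.1 = i <;> simp [h, Function.comp_def]

lemma threadPositions_getElem?_bind (σ : List (ι × Event V)) (i : ι) (j : ℕ) :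
    ((threadPositions σ i)[j]?).bind (fun p => σ[p]?) =
      ((σ.filterMap fun a => if a.1 = i then some a.2 else none)[j]?).map fun e => (i, e) := by
  induction σ generalizing j with
  | nil => simp [threadPositions]
  | cons a σ ih =>
    have hshift : ∀ o : Option ℕ, (o.map Nat.succ).bind (fun p => (a :: σ)[p]?) =
        o.bind (fun p => σ[p]?) := by
      rintro (_ | _) <;> rfl
    rw [threadPositions_cons, List.filterMap_cons]
    by_cases h : a.1 = i
    · obtain ⟨a, e⟩ := a
      subst h
      cases j with
      | zero => simp
      | succ j => simpa [hshift] using ih j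
    · simpa [h, hshift] using ih j

lemma mem_threadPositions {σ : List (ι × Event V)} {i : ι} {p : ℕ} :
    p ∈ threadPositions σ i ↔ p < σ.length ∧ (σ[p]?).map Prod.fst = some i := by
  simp [threadPositions]

lemma posOf_eq_getElem {σ : List (ι × Event V)} {i : ι} {j : ℕ}
    (h : j < (threadPositions σ i).length) :
    posOf σ i j = (threadPositions σ i)[j] := by
  simp [posOf, List.getD_eq_getElem?_getD, List.getElem?_eq_getElem h]

variable {threads : ι → List (Event V)} {σ : List (ι × Event V)}

namespace IsInterleaving

lemma length_threadPositions (hil : IsInterleaving threads σ) (i : ι) :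
    (threadPositions σ i).length = (threads i).length := by
  have key := threadPositions_getElem?_bind σ i
  rw [hil i] at key
  apply le_antisymm
  · by_contra! hlt
    have h := key (threads i).length
    rw [List.getElem?_eq_none le_rfl, List.getElem?_eq_getElem hlt, Option.bind_some] at h
    have hp := (mem_threadPositions.1 (List.getElem_mem hlt)).2
    simp [h] at hp
  · by_contra! hlt
    have h := key (threadPositions σ i).length
    rw [List.getElem?_eq_none le_rfl, List.getElem?_eq_getElem hlt] at h
    simp at h

lemma getElem?_posOf (hil : IsInterleaving threads σ) {i : ι} {j : ℕ} {e : Event V}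
    (he : (threads i)[j]? = some e) :
    σ[posOf σ i j]? = some (i, e) := by
  have hj : j < (threadPositions σ i).length :=
    hil.length_threadPositions i ▸ (List.getElem?_eq_some_iff.1 he).1
  have key := threadPositions_getElem?_bind σ i j
  rw [hil i, he, List.getElem?_eq_getElem hj] at key
  simpa [posOf_eq_getElem hj] using key

lemma posOf_lt_posOf (hil : IsInterleaving threads σ) {i : ι} {m j : ℕ}
    (hmj : m < j) (hj : j < (threads i).length) :
    posOf σ i m < posOf σ i j := by
  have hj' : j < (threadPositions σ i).length := hil.length_threadPositions i ▸ hj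
  rw [posOf_eq_getElem (hmj.trans hj'), posOf_eq_getElem hj']
  exact List.pairwise_iff_getElem.1 (List.pairwise_lt_range.filter _) _ _ _ _ hmj

lemma exists_posOf_eq (hil : IsInterleaving threads σ) {i : ι} {q : ℕ} {e : Event V}
    (hq : σ[q]? = some (i, e)) :
    ∃ m, (threads i)[m]? = some e ∧ posOf σ i m = q := by
  have hmem : q ∈ threadPositions σ i :=
    mem_threadPositions.2 ⟨(List.getElem?_eq_some_iff.1 hq).1, by simp [hq]⟩
  obtain ⟨m, hm, rfl⟩ := List.mem_iff_getElem.1 hmem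
  refine ⟨m, ?_, posOf_eq_getElem hm⟩
  have key := threadPositions_getElem?_bind σ i m
  rw [hil i, List.getElem?_eq_getElem hm, Option.bind_some, hq] at key
  cases he : (threads i)[m]? <;> simp_all

end IsInterleaving

lemma ContiguousFrom.posOf_eq_add (hil : IsInterleaving threads σ) {i : ι} {s : ℕ}
    (hcont : ContiguousFrom σ i s) {j : ℕ} (hsj : s ≤ j) (hj : j < (threads i).length) :
    posOf σ i j = posOf σ i s + (j - s) := by
  induction j, hsj using Nat.le_induction with
  | base => simp
  | succ j hsj ih =>
    rw [hcont j hsj (hil.length_threadPositions i ▸ hj), ih (by omega)]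
    omega

lemma ContiguousFrom.exists_getElem?_eq (hil : IsInterleaving threads σ) {i : ι} {s : ℕ}
    (hcont : ContiguousFrom σ i s) (hs : s < (threads i).length) {q : ℕ}
    (h₁ : posOf σ i s ≤ q) (h₂ : q ≤ posOf σ i ((threads i).length - 1)) :
    ∃ e, σ[q]? = some (i, e) := by
  have hlast := hcont.posOf_eq_add hil (j := (threads i).length - 1) (by omega) (by omega)
  have hj : s + (q - posOf σ i s) < (threads i).length := by omega
  have hq : posOf σ i (s + (q - posOf σ i s)) = q := by
    rw [hcont.posOf_eq_add hil (by omega) hj]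
    omega
  exact ⟨_, hq ▸ hil.getElem?_posOf (List.getElem?_eq_getElem hj)⟩

lemma IsInterleaving.posOf_last_lt_of_posOf_lt (hil : IsInterleaving threads σ)
    {s : ι → ℕ} (hcont : ∀ i, ContiguousFrom σ i (s i)) {i i' : ι} (hne : i ≠ i') {j j' : ℕ}
    (hj : s i ≤ j) (hjl : j < (threads i).length)
    (hj' : s i' ≤ j') (hjl' : j' < (threads i').length)
    (hlt : posOf σ i j < posOf σ i' j') :
    posOf σ i ((threads i).length - 1) < posOf σ i' ((threads i').length - 1) := by
  have hpos := (hcont i).posOf_eq_add hil hj hjl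
  have hpos' := (hcont i').posOf_eq_add hil hj' hjl'
  have hend := (hcont i).posOf_eq_add hil (j := (threads i).length - 1) (by omega) (by omega)
  have hend' := (hcont i').posOf_eq_add hil (j := (threads i').length - 1) (by omega) (by omega)
  by_contra! hle
  -- otherwise the two intervals share the position `max (start i) (start i')`
  obtain ⟨e, he⟩ := (hcont i).exists_getElem?_eq hil (by omega)
    (le_max_left _ (posOf σ i' (s i'))) (by omega)
  obtain ⟨e', he'⟩ := (hcont i').exists_getElem?_eq hil (by omega)
    (le_max_right (posOf σ i (s i)) _) (by omega)
  rw [he] at he'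
  exact hne (Prod.ext_iff.1 (Option.some_injective _ he')).1

lemma IsInterleaving.posOf_read_lt_posOf_write (hil : IsInterleaving threads σ)
    (hsc : SC (σ.map Prod.snd)) (hw : OneWriter threads) {tr tw : ι} {x : V} {d d' jr jw : ℕ}
    (hdd : d ≠ d') (hread : (threads tr)[jr]? = some (Event.read x d))
    (hwrite : (threads tw)[jw]? = some (Event.write x d'))
    (hlast : ∀ j d'', jw < j → (threads tw)[j]? ≠ some (Event.write x d'')) :
    posOf σ tr jr < posOf σ tw jw := by
  obtain ⟨q, hq_lt, hq_write, hq_between⟩ :=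
    hsc (posOf σ tr jr) x d (by simp [hil.getElem?_posOf hread])
  obtain ⟨⟨iq, e⟩, hσq, rfl⟩ : ∃ a, σ[q]? = some a ∧ a.2 = Event.write x d := by
    simpa using hq_write
  obtain ⟨m, hm, rfl⟩ := hil.exists_posOf_eq hσq
  obtain rfl : iq = tw :=
    hw x iq tw ⟨_, List.mem_of_getElem? hm, rfl⟩ ⟨_, List.mem_of_getElem? hwrite, rfl⟩
  have hm_lt : m < jw := by
    refine lt_of_le_of_ne (not_lt.1 fun h => hlast m d h hm) ?_
    rintro rfl
    simp [hwrite] at hm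
    exact hdd hm.symm
  have hq_lt_write := hil.posOf_lt_posOf hm_lt (List.getElem?_eq_some_iff.1 hwrite).1
  by_contra! hle
  rcases hle.lt_or_eq with h | h
  · exact hq_between _ hq_lt_write h d' hdd.symm (by simp [hil.getElem?_posOf hwrite])
  · have := hil.getElem?_posOf hread
    simp [← h, hil.getElem?_posOf hwrite] at this

lemma IsInterleaving.posOf_last_lt_of_conflictEdge (hil : IsInterleaving threads σ)
    (hsc : SC (σ.map Prod.snd)) (hw : OneWriter threads) {s : ι → ℕ}
    (hcont : ∀ i, ContiguousFrom σ i (s i)) {tr tw : ι} (hedge : ConflictEdge threads s tr tw) :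
    posOf σ tr ((threads tr).length - 1) < posOf σ tw ((threads tw).length - 1) := by
  obtain ⟨hne, x, d, d', jr, jw, hdd, hsr, hread, hsw, hwrite, hlast⟩ := hedge
  exact hil.posOf_last_lt_of_posOf_lt hcont hne hsr (List.getElem?_eq_some_iff.1 hread).1
    hsw (List.getElem?_eq_some_iff.1 hwrite).1
    (hil.posOf_read_lt_posOf_write hsc hw hdd hread hwrite hlast)

end Interleaving

/-- for a 1-writer program with outer blocks given as the suffixes of the
threads starting at `s i`, if the conflict graph on the outer blocks has a directed
cycle, then there is no SC interleaving of the block-program (i.e., no SC interleaving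
in which each outer block appears contiguously). -/
theorem stmt5 {V : Type} (k : ℕ) (threads : Fin k → List (Event V))
    (hw : OneWriter threads)
    (s : Fin k → ℕ) (t : Fin k)
    (hcyc : Relation.TransGen (ConflictEdge threads s) t t) :
    ¬ ∃ σ : List (Fin k × Event V),
        IsInterleaving threads σ ∧ SC (σ.map Prod.snd) ∧
        ∀ i, ContiguousFrom σ i (s i) := by
  rintro ⟨σ, hil, hsc, hcont⟩
  have hlt : Relation.TransGen (· < ·) (posOf σ t ((threads t).length - 1))
      (posOf σ t ((threads t).length - 1)) :=
    hcyc.lift (fun i => posOf σ i ((threads i).length - 1))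
      fun _ _ hedge => hil.posOf_last_lt_of_conflictEdge hsc hw hcont hedge
  rw [Relation.transGen_eq_self] at hlt
  exact lt_irrefl _ hlt
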